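/- Assume Assumption A holds, that μ(ω) > 0 for every ω ∈ Ω (write μ_min = min_ω μ(ω)), and that 0 ≤ γ with γ/(μ_min·Δ) < 1. Then for every finite nonempty signal set S, every signaling scheme π on S, and every γ-best-responding receiver strategy ρ, the sender's expected utility satisfies U_μ(π,ρ) ≤ OPT^BP(μ) + γ/(μ_min·Δ). -/

import Mathlib

open Finset
open scoped BigOperators Classical

noncomputable section

/-- `p` is a family of probability distributions on the finite set `β`, indexed by `α`. -/
def IsDist {α β : Type*} [Fintype β] (p : α → β → ℝ) : Prop :=
  (∀ x y, 0 ≤ p x y) ∧ ∀ x, ∑ y, p x y = 1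

/-- `p` is a probability distribution on the finite set `β`. -/
def IsProb {β : Type*} [Fintype β] (p : β → ℝ) : Prop :=
  (∀ y, 0 ≤ p y) ∧ ∑ y, p y = 1

/-- The marginal probability `π(s)` of signal `s` under prior `μ` and signaling scheme `π`. -/
def marg {Ω S : Type*} [Fintype Ω] (μ : Ω → ℝ) (π : Ω → S → ℝ) (s : S) : ℝ :=
  ∑ ω, μ ω * π ω s

/-- The posterior probability `π(ω|s)` of state `ω` given signal `s`. -/
def post {Ω S : Type*} [Fintype Ω] (μ : Ω → ℝ) (π : Ω → S → ℝ) (ω : Ω) (s : S) : ℝ :=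
  μ ω * π ω s / marg μ π s

/-- The receiver's expected utility `v(a, μ_s)` of action `a` under the posterior of signal `s`. -/
def vPost {Ω S A : Type*} [Fintype Ω] (μ : Ω → ℝ) (π : Ω → S → ℝ)
    (v : A → Ω → ℝ) (a : A) (s : S) : ℝ :=
  ∑ ω, post μ π ω s * v a ω

/-- Action `a` is `γ`-best-responding to signal `s`. -/
def IsBR {Ω S A : Type*} [Fintype Ω] [Fintype A] (μ : Ω → ℝ) (π : Ω → S → ℝ)
    (v : A → Ω → ℝ) (γ : ℝ) (a : A) (s : S) : Prop :=
  ∀ a' : A, vPost μ π v a' s - γ ≤ vPost μ π v a s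

/-- `ρ` is a `γ`-best-responding receiver strategy: on every signal that is sent with positive
probability, it puts probability `1` on `γ`-best-responding actions (equivalently, probability `0`
on every action that is not `γ`-best-responding). -/
def IsBRStrategy {Ω S A : Type*} [Fintype Ω] [Fintype A] (μ : Ω → ℝ) (π : Ω → S → ℝ)
    (v : A → Ω → ℝ) (γ : ℝ) (ρ : S → A → ℝ) : Prop :=
  ∀ s, 0 < marg μ π s → ∀ a, ¬ IsBR μ π v γ a s → ρ s a = 0

/-- `ρ` is a `(γ, δ)`-best-responding receiver strategy: on every signal that is sent with
positive probability, it puts probability at least `1 - δ` on `γ`-best-responding actions. -/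
def IsApproxBRStrategy {Ω S A : Type*} [Fintype Ω] [Fintype A] (μ : Ω → ℝ) (π : Ω → S → ℝ)
    (v : A → Ω → ℝ) (γ δ : ℝ) (ρ : S → A → ℝ) : Prop :=
  ∀ s, 0 < marg μ π s →
    1 - δ ≤ ∑ a ∈ Finset.univ.filter (fun a => IsBR μ π v γ a s), ρ s a

/-- The sender's expected utility `U_μ(π, ρ)`. -/
def senderU {Ω S A : Type*} [Fintype Ω] [Fintype S] [Fintype A] (μ : Ω → ℝ) (π : Ω → S → ℝ)
    (u : A → Ω → ℝ) (ρ : S → A → ℝ) : ℝ :=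
  ∑ ω, ∑ s, μ ω * π ω s * ∑ a, ρ s a * u a ω

/-- The obedient strategy for a direct-revelation scheme: take the recommended action. -/
def obedient {A : Type*} : A → A → ℝ := fun s a => if a = s then 1 else 0

/-- `OPT^BP(μ)`: the supremum of the sender's expected utility over direct-revelation schemes
(signal set `S = A`) and best-responding (`0`-best-responding) receiver strategies. -/
def OPTBP {Ω A : Type*} [Fintype Ω] [Fintype A] (μ : Ω → ℝ) (v u : A → Ω → ℝ) : ℝ :=
  sSup {x | ∃ (π : Ω → A → ℝ) (ρ : A → A → ℝ), IsDist π ∧ IsDist ρ ∧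
    IsBRStrategy μ π v 0 ρ ∧ x = senderU μ π u ρ}

/-- The `α`-robustification of a direct-revelation scheme `π`, where `aOf ω` is the receiver's
unique optimal action at state `ω`. -/
def robustify {Ω A : Type*} (π : Ω → A → ℝ) (aOf : Ω → A) (α : ℝ) : Ω → A → ℝ :=
  fun ω s => (1 - α) * π ω s + if s = aOf ω then α else 0

/-- `μ(Ω_a)`: the prior mass of the set of states whose unique optimal action is `a`. -/
def massOf {Ω A : Type*} [Fintype Ω] (μ : Ω → ℝ) (aOf : Ω → A) (a : A) : ℝ :=
  ∑ ω ∈ Finset.univ.filter (fun ω => aOf ω = a), μ ω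

/-- `μ_min = min_ω μ(ω)`. -/
def minPrior {Ω : Type*} [Fintype Ω] [Nonempty Ω] (μ : Ω → ℝ) : ℝ :=
  Finset.univ.inf' Finset.univ_nonempty μ

/-- The advantage term of recommendation `s` against deviation `a` in a direct-revelation
scheme `π`: the advantage `adv_π(s)` is the minimum of this quantity over `a ≠ s`. -/
def advTerm {Ω A : Type*} [Fintype Ω] (μ : Ω → ℝ) (π : Ω → A → ℝ) (v : A → Ω → ℝ)
    (s a : A) : ℝ :=
  ∑ ω, post μ π ω s * (v s ω - v a ω)

/-! Recommend to the receiver the action `ρ` would take, and with probability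
`ε = γ / (μ_min Δ)` recommend instead the receiver's own optimal action `a_ω`. Each recommendation
`a` is then sent in every state of `Ω_a` with probability at least `ε`, which gains the receiver at
least `ε μ_min Δ = γ` (unnormalised) utility for obeying, enough to pay for the `γ` he could lose
under the original strategy. So obeying is an exact best response, and the sender loses at most
`ε` by the mixing. -/

section Signaling

variable {Ω S A : Type*}

/-- `vPost μ π v a s - vPost μ π v a' s` without the division by `marg μ π s`, which is `0` on
signals that are never sent. -/
def advMass [Fintype Ω] (μ : Ω → ℝ) (π : Ω → S → ℝ) (v : A → Ω → ℝ) (a a' : A) (s : S) : ℝ :=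
  ∑ ω, μ ω * π ω s * (v a ω - v a' ω)

def toDirect [Fintype S] (π : Ω → S → ℝ) (ρ : S → A → ℝ) : Ω → A → ℝ :=
  fun ω a => ∑ s, π ω s * ρ s a

lemma vPost_sub_vPost [Fintype Ω] (μ : Ω → ℝ) (π : Ω → S → ℝ) (v : A → Ω → ℝ) (a a' : A) (s : S) :
    vPost μ π v a s - vPost μ π v a' s = advMass μ π v a a' s / marg μ π s := by
  simp only [vPost, post, advMass, ← sum_sub_distrib, sum_div]
  exact sum_congr rfl fun ω _ => by ring

lemma sum_marg [Fintype Ω] [Fintype S] {μ : Ω → ℝ} (hμ : IsProb μ) {π : Ω → S → ℝ} (hπ : IsDist π) :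
    ∑ s, marg μ π s = 1 := by
  simp only [marg]
  rw [sum_comm]
  simp only [← mul_sum, hπ.2, mul_one, hμ.2]

lemma marg_nonneg [Fintype Ω] [Fintype S] {μ : Ω → ℝ} (hμ : IsProb μ) {π : Ω → S → ℝ}
    (hπ : IsDist π) (s : S) : 0 ≤ marg μ π s :=
  sum_nonneg fun ω _ => mul_nonneg (hμ.1 ω) (hπ.1 ω s)

lemma IsDist.le_one [Fintype S] {α : Type*} {p : α → S → ℝ} (hp : IsDist p) (x : α)
    (y : S) : p x y ≤ 1 :=
  hp.2 x ▸ single_le_sum (fun z _ => hp.1 x z) (mem_univ y)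

lemma IsDist.toDirect [Fintype S] [Fintype A] {π : Ω → S → ℝ} (hπ : IsDist π) {ρ : S → A → ℝ}
    (hρ : IsDist ρ) : IsDist (toDirect π ρ) := by
  refine ⟨fun ω a => sum_nonneg fun s _ => mul_nonneg (hπ.1 ω s) (hρ.1 s a), fun ω => ?_⟩
  simp only [_root_.toDirect]
  rw [sum_comm]
  simp only [← mul_sum, hρ.2, mul_one, hπ.2]

lemma IsDist.robustify [Fintype A] {π : Ω → A → ℝ} (hπ : IsDist π) (aOf : Ω → A) {α : ℝ}
    (hα0 : 0 ≤ α) (hα1 : α ≤ 1) : IsDist (robustify π aOf α) := by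
  refine ⟨fun ω a => add_nonneg (mul_nonneg (by linarith) (hπ.1 ω a)) (by positivity),
    fun ω => ?_⟩
  simp [_root_.robustify, sum_add_distrib, ← mul_sum, hπ.2 ω]

lemma isDist_obedient [Fintype A] : IsDist (obedient : A → A → ℝ) :=
  ⟨fun s a => by unfold obedient; positivity, fun s => by simp [obedient]⟩

lemma senderU_le_one [Fintype Ω] [Fintype S] [Fintype A] {μ : Ω → ℝ} (hμ : IsProb μ)
    {π : Ω → S → ℝ} (hπ : IsDist π) {u : A → Ω → ℝ} (hu : ∀ a ω, u a ω ≤ 1)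
    {ρ : S → A → ℝ} (hρ : IsDist ρ) :
    senderU μ π u ρ ≤ 1 := by
  have hρu : ∀ s ω, ∑ a, ρ s a * u a ω ≤ 1 := fun s ω =>
    calc ∑ a, ρ s a * u a ω ≤ ∑ a, ρ s a :=
          sum_le_sum fun a _ => mul_le_of_le_one_right (hρ.1 s a) (hu a ω)
      _ = 1 := hρ.2 s
  calc senderU μ π u ρ ≤ ∑ ω, ∑ s, μ ω * π ω s :=
        sum_le_sum fun ω _ => sum_le_sum fun s _ =>
          mul_le_of_le_one_right (mul_nonneg (hμ.1 ω) (hπ.1 ω s)) (hρu s ω)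
    _ = 1 := by rw [sum_comm]; exact sum_marg hμ hπ

lemma senderU_le_OPTBP [Fintype Ω] [Fintype A] {μ : Ω → ℝ} (hμ : IsProb μ) {v u : A → Ω → ℝ}
    (hu : ∀ a ω, u a ω ≤ 1) {π : Ω → A → ℝ} (hπ : IsDist π) {ρ : A → A → ℝ} (hρ : IsDist ρ)
    (hρBR : IsBRStrategy μ π v 0 ρ) :
    senderU μ π u ρ ≤ OPTBP μ v u := by
  refine le_csSup ⟨1, ?_⟩ ⟨π, ρ, hπ, hρ, hρBR, rfl⟩
  rintro x ⟨π', ρ', hπ', hρ', -, rfl⟩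
  exact senderU_le_one hμ hπ' hu hρ'

lemma senderU_obedient [Fintype Ω] [Fintype A] (μ : Ω → ℝ) (π : Ω → A → ℝ) (u : A → Ω → ℝ) :
    senderU μ π u obedient = ∑ ω, ∑ a, μ ω * π ω a * u a ω := by
  simp [senderU, obedient]

lemma senderU_toDirect [Fintype Ω] [Fintype S] [Fintype A] (μ : Ω → ℝ) (π : Ω → S → ℝ)
    (u : A → Ω → ℝ) (ρ : S → A → ℝ) :
    senderU μ (toDirect π ρ) u obedient = senderU μ π u ρ := by
  rw [senderU_obedient]
  simp only [senderU, toDirect, mul_sum, sum_mul]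
  refine sum_congr rfl fun ω _ => ?_
  rw [sum_comm]
  exact sum_congr rfl fun s _ => sum_congr rfl fun a _ => by ring

lemma senderU_robustify [Fintype Ω] [Fintype A] (μ : Ω → ℝ) (π : Ω → A → ℝ) (u : A → Ω → ℝ)
    (aOf : Ω → A) (α : ℝ) :
    senderU μ (robustify π aOf α) u obedient
      = (1 - α) * senderU μ π u obedient + α * ∑ ω, μ ω * u (aOf ω) ω := by
  simp only [senderU_obedient, robustify, mul_sum, ← sum_add_distrib]
  refine sum_congr rfl fun ω _ => ?_
  have hpoint : ∑ a, (if a = aOf ω then α * (μ ω * u a ω) else 0) = α * (μ ω * u (aOf ω) ω) := by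
    simp
  rw [← hpoint, ← sum_add_distrib]
  exact sum_congr rfl fun a _ => by split_ifs <;> ring

lemma isBRStrategy_obedient_of_advMass_nonneg [Fintype Ω] [Fintype A] {μ : Ω → ℝ} {π : Ω → A → ℝ}
    {v : A → Ω → ℝ} (h : ∀ a a', 0 ≤ advMass μ π v a a' a) : IsBRStrategy μ π v 0 obedient := by
  intro s hs a ha
  by_contra hne
  obtain rfl : a = s := by by_contra has; simp [obedient, has] at hne
  refine ha fun a' => ?_
  have := vPost_sub_vPost μ π v a a' a
  have := div_nonneg (h a a') hs.le
  linarith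

lemma neg_le_advMass_toDirect [Fintype Ω] [Fintype S] [Fintype A] {μ : Ω → ℝ} (hμ : IsProb μ)
    {π : Ω → S → ℝ} (hπ : IsDist π) {v : A → Ω → ℝ} {γ : ℝ} (hγ : 0 ≤ γ) {ρ : S → A → ℝ}
    (hρ : IsDist ρ) (hρBR : IsBRStrategy μ π v γ ρ) (a a' : A) :
    -γ ≤ advMass μ (toDirect π ρ) v a a' a := by
  have hsignal : ∀ s, -(γ * (marg μ π s * ρ s a)) ≤ ρ s a * advMass μ π v a a' s := by
    intro s
    rcases (marg_nonneg hμ hπ s).eq_or_lt with hs | hs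
    · have hjoint : ∀ ω, μ ω * π ω s = 0 := fun ω =>
        (sum_eq_zero_iff_of_nonneg fun ω _ => mul_nonneg (hμ.1 ω) (hπ.1 ω s)).mp
          hs.symm ω (mem_univ ω)
      simp [← hs, advMass, hjoint]
    rcases (hρ.1 s a).eq_or_lt with hρa | hρa
    · simp [← hρa]
    have hBR : IsBR μ π v γ a s := by_contra fun h => hρa.ne' (hρBR s hs a h)
    have hadv : -γ * marg μ π s ≤ advMass μ π v a a' s := by
      have := hBR a'
      rw [← le_div_iff₀ hs, ← vPost_sub_vPost]
      linarith
    nlinarith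
  have hmass : ∑ s, marg μ π s * ρ s a ≤ 1 :=
    calc ∑ s, marg μ π s * ρ s a ≤ ∑ s, marg μ π s :=
          sum_le_sum fun s _ => mul_le_of_le_one_right (marg_nonneg hμ hπ s) (hρ.le_one s a)
      _ = 1 := sum_marg hμ hπ
  have hsplit : advMass μ (toDirect π ρ) v a a' a = ∑ s, ρ s a * advMass μ π v a a' s := by
    simp only [advMass, toDirect, mul_sum, sum_mul]
    rw [sum_comm]
    exact sum_congr rfl fun s _ => sum_congr rfl fun ω _ => by ring
  rw [hsplit]
  calc -γ ≤ -(γ * ∑ s, marg μ π s * ρ s a) := by nlinarith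
    _ = ∑ s, -(γ * (marg μ π s * ρ s a)) := by rw [mul_sum, sum_neg_distrib]
    _ ≤ _ := sum_le_sum fun s _ => hsignal s

lemma advMass_robustify [Fintype Ω] (μ : Ω → ℝ) (π : Ω → A → ℝ) (v : A → Ω → ℝ) (aOf : Ω → A)
    (α : ℝ) (a a' : A) :
    advMass μ (robustify π aOf α) v a a' a = (1 - α) * advMass μ π v a a' a
      + α * ∑ ω ∈ univ.filter (fun ω => aOf ω = a), μ ω * (v a ω - v a' ω) := by
  rw [sum_filter, advMass, advMass, mul_sum, mul_sum, ← sum_add_distrib]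
  refine sum_congr rfl fun ω _ => ?_
  by_cases h : aOf ω = a
  · simp only [robustify, h, ↓reduceIte]; ring
  · simp only [robustify, h, Ne.symm h, ↓reduceIte, add_zero, mul_zero]; ring

lemma minPrior_le [Fintype Ω] [Nonempty Ω] (μ : Ω → ℝ) (ω : Ω) : minPrior μ ≤ μ ω :=
  inf'_le μ (mem_univ ω)

lemma minPrior_pos [Fintype Ω] [Nonempty Ω] {μ : Ω → ℝ} (hμ : ∀ ω, 0 < μ ω) :
    0 < minPrior μ :=
  (lt_inf'_iff univ_nonempty).mpr fun ω _ => hμ ω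

lemma minPrior_le_massOf [Fintype Ω] [Nonempty Ω] {μ : Ω → ℝ} (hμ : ∀ ω, 0 ≤ μ ω) {aOf : Ω → A}
    {a : A} (ha : ∃ ω, aOf ω = a) : minPrior μ ≤ massOf μ aOf a := by
  obtain ⟨ω, hω⟩ := ha
  exact (minPrior_le μ ω).trans
    (single_le_sum (fun ω _ => hμ ω) (mem_filter.mpr ⟨mem_univ ω, hω⟩))

lemma massOf_mul_le_sum [Fintype Ω] {μ : Ω → ℝ} (hμ : ∀ ω, 0 ≤ μ ω) {v : A → Ω → ℝ} {aOf : Ω → A}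
    {Δ : ℝ} (hΔ : ∀ ω a, a ≠ aOf ω → Δ ≤ v (aOf ω) ω - v a ω) {a a' : A} (ha' : a' ≠ a) :
    massOf μ aOf a * Δ
      ≤ ∑ ω ∈ univ.filter (fun ω => aOf ω = a), μ ω * (v a ω - v a' ω) := by
  rw [massOf, sum_mul]
  refine sum_le_sum fun ω hω => ?_
  obtain rfl := (mem_filter.mp hω).2
  exact mul_le_mul_of_nonneg_left (hΔ ω a' ha') (hμ ω)

lemma isBRStrategy_obedient_robustify_toDirect [Fintype Ω] [Fintype S] [Fintype A] [Nonempty Ω]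
    {μ : Ω → ℝ} (hμ : IsProb μ) {π : Ω → S → ℝ} (hπ : IsDist π) {v : A → Ω → ℝ} {γ : ℝ}
    (hγ : 0 ≤ γ) {ρ : S → A → ℝ} (hρ : IsDist ρ) (hρBR : IsBRStrategy μ π v γ ρ) {aOf : Ω → A}
    (hOnto : ∀ a, ∃ ω, aOf ω = a) {Δ : ℝ} (hΔpos : 0 < Δ)
    (hΔ : ∀ ω a, a ≠ aOf ω → Δ ≤ v (aOf ω) ω - v a ω) {α : ℝ} (hα0 : 0 ≤ α) (hα1 : α ≤ 1)
    (hαγ : γ ≤ α * (minPrior μ * Δ)) :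
    IsBRStrategy μ (robustify (toDirect π ρ) aOf α) v 0 obedient := by
  refine isBRStrategy_obedient_of_advMass_nonneg fun a a' => ?_
  rcases eq_or_ne a' a with rfl | ha'
  · simp [advMass]
  have hρ_loss := neg_le_advMass_toDirect hμ hπ hγ hρ hρBR a a'
  have hfiber := (mul_le_mul_of_nonneg_right (minPrior_le_massOf hμ.1 (hOnto a)) hΔpos.le).trans
    (massOf_mul_le_sum hμ.1 hΔ ha')
  rw [advMass_robustify]
  nlinarith [mul_le_mul_of_nonneg_left hρ_loss (sub_nonneg.mpr hα1),
    mul_le_mul_of_nonneg_left hfiber hα0]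

end Signaling

theorem bp_upper_bound_general
    {Ω A : Type*} (S : Type*) [Fintype Ω] [Fintype A] [Fintype S]
    [Nonempty Ω]
    (μ : Ω → ℝ) (hμ : IsProb μ) (hμpos : ∀ ω, 0 < μ ω)
    (v : A → Ω → ℝ)
    (u : A → Ω → ℝ) (hu : ∀ a ω, 0 ≤ u a ω ∧ u a ω ≤ 1)
    -- Assumption A
    (aOf : Ω → A)
    (Δ : ℝ) (hΔpos : 0 < Δ) (hΔ : ∀ ω a, a ≠ aOf ω → Δ ≤ v (aOf ω) ω - v a ω)
    (hOnto : ∀ a, ∃ ω, aOf ω = a)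
    (γ : ℝ) (hγ : 0 ≤ γ) (hγ1 : γ / (minPrior μ * Δ) < 1)
    (π : Ω → S → ℝ) (hπ : IsDist π)
    (ρ : S → A → ℝ) (hρ : IsDist ρ) (hρBR : IsBRStrategy μ π v γ ρ) :
    senderU μ π u ρ ≤ OPTBP μ v u + γ / (minPrior μ * Δ) := by
  set ε := γ / (minPrior μ * Δ)
  have hmΔ : 0 < minPrior μ * Δ := mul_pos (minPrior_pos hμpos) hΔpos
  have hε0 : 0 ≤ ε := div_nonneg hγ hmΔ.le
  have hεγ : γ ≤ ε * (minPrior μ * Δ) := (div_mul_cancel₀ γ hmΔ.ne').ge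
  have hobey := isBRStrategy_obedient_robustify_toDirect hμ hπ hγ hρ hρBR hOnto hΔpos hΔ
    hε0 hγ1.le hεγ
  have hopt := senderU_le_OPTBP hμ (fun a ω => (hu a ω).2)
    ((hπ.toDirect hρ).robustify aOf hε0 hγ1.le) isDist_obedient hobey
  rw [senderU_robustify, senderU_toDirect] at hopt
  have hU := senderU_le_one hμ hπ (fun a ω => (hu a ω).2) hρ
  have hbest : 0 ≤ ∑ ω, μ ω * u (aOf ω) ω :=
    sum_nonneg fun ω _ => mul_nonneg (hμ.1 ω) (hu (aOf ω) ω).1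
  linarith [mul_le_mul_of_nonneg_left hU hε0, mul_nonneg hε0 hbest]

/-- Lemma 2.5, upper bound: under Assumption A, with `μ_min > 0` and
`γ/(μ_min·Δ) < 1`, every signaling scheme on every finite nonempty signal set gives the sender
at most `OPT^BP(μ) + γ/(μ_min·Δ)` against every `γ`-best-responding strategy. -/
theorem bp_upper_bound
    {Ω A : Type*} (S : Type*) [Fintype Ω] [Fintype A] [Fintype S]
    [Nonempty Ω] [Nonempty A] [Nonempty S]
    (μ : Ω → ℝ) (hμ : IsProb μ) (hμpos : ∀ ω, 0 < μ ω)
    (v : A → Ω → ℝ) (hv : ∀ a ω, 0 ≤ v a ω ∧ v a ω ≤ 1)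
    (u : A → Ω → ℝ) (hu : ∀ a ω, 0 ≤ u a ω ∧ u a ω ≤ 1)
    -- Assumption A
    (aOf : Ω → A) (hBest : ∀ ω a, a ≠ aOf ω → v a ω < v (aOf ω) ω)
    (Δ : ℝ) (hΔpos : 0 < Δ) (hΔ : ∀ ω a, a ≠ aOf ω → Δ ≤ v (aOf ω) ω - v a ω)
    (hOnto : ∀ a, ∃ ω, aOf ω = a)
    (γ : ℝ) (hγ : 0 ≤ γ) (hγ1 : γ / (minPrior μ * Δ) < 1)
    (π : Ω → S → ℝ) (hπ : IsDist π)
    (ρ : S → A → ℝ) (hρ : IsDist ρ) (hρBR : IsBRStrategy μ π v γ ρ) :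
    senderU μ π u ρ ≤ OPTBP μ v u + γ / (minPrior μ * Δ) :=
  bp_upper_bound_general S μ hμ hμpos v u hu aOf Δ hΔpos hΔ hOnto γ hγ hγ1 π hπ ρ hρ hρBR
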